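/- arXiv:2109.11143 — 2 statements merged into one kernel-verified Lean document; each statement's English description precedes it below -/
import Mathlib

section
/- Let r ∈ EuclideanSpace ℝ (Fin n) with ⟪r, ε⟫ = 0. Then the expected squared norm after one random Kaczmarz step contracts: ∑_{j=1}^{n} (‖c_j‖²/‖C‖_F²)·‖T_j r‖² ≤ (1 − σ²/‖C‖_F²)·‖r‖². -/
open scoped RealInnerProductSpace

/-- The `j`-th row of `C` as a vector in Euclidean space. -/
noncomputable def row {n : ℕ} (C : Matrix (Fin n) (Fin n) ℝ) (j : Fin n) :
    EuclideanSpace ℝ (Fin n) := (WithLp.equiv 2 (Fin n → ℝ)).symm (C j)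

/-- Matrix-vector multiplication, landing in Euclidean space. -/
noncomputable def mulVecE {n : ℕ} (C : Matrix (Fin n) (Fin n) ℝ)
    (v : EuclideanSpace ℝ (Fin n)) : EuclideanSpace ℝ (Fin n) :=
  (WithLp.equiv 2 (Fin n → ℝ)).symm (C.mulVec ((WithLp.equiv 2 (Fin n → ℝ)) v))

/-- Squared Frobenius norm. -/
noncomputable def frobSq {n : ℕ} (C : Matrix (Fin n) (Fin n) ℝ) : ℝ :=
  ∑ i, ∑ j, (C i j) ^ 2

open scoped Classical in
/-- Kaczmarz update for row `j`. -/
noncomputable def kacz {n : ℕ} (C : Matrix (Fin n) (Fin n) ℝ) (j : Fin n)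
    (y : EuclideanSpace ℝ (Fin n)) : EuclideanSpace ℝ (Fin n) :=
  if row C j = 0 then y
  else y - ((⟪y, row C j⟫) / ‖row C j‖ ^ 2) • row C j

/-- Kaczmarz iteration along an index sequence `j : Fin k → Fin n`,
applying `T_{j 0}` first and `T_{j (k-1)}` last. -/
noncomputable def kaczIter {n : ℕ} (C : Matrix (Fin n) (Fin n) ℝ) :
    (k : ℕ) → (Fin k → Fin n) → EuclideanSpace ℝ (Fin n) → EuclideanSpace ℝ (Fin n)
  | 0, _, y => y
  | (k + 1), j, y => kacz C (j (Fin.last k)) (kaczIter C k (fun i => j i.castSucc) y)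


/-! Weighting the `j`-th Kaczmarz step by `‖c_j‖²` clears its denominator:
`‖c_j‖² ‖T_j r‖² = ‖c_j‖² ‖r‖² - ⟪r, c_j⟫²`, with both sides zero when `c_j = 0`. Summing over `j`
gives `‖C‖_F² ‖r‖² - ‖C r‖²`, and `‖C r‖² ≥ σ² ‖r‖²` because `r ⊥ ε`. -/

theorem norm_sq_mul_norm_sub_inner_div_smul_sq {E : Type*} [NormedAddCommGroup E]
    [InnerProductSpace ℝ E] (c y : E) :
    ‖c‖ ^ 2 * ‖y - (⟪y, c⟫ / ‖c‖ ^ 2) • c‖ ^ 2 = ‖c‖ ^ 2 * ‖y‖ ^ 2 - ⟪y, c⟫ ^ 2 := by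
  rcases eq_or_ne c 0 with rfl | hc
  · simp
  · have hc2 : ‖c‖ ^ 2 ≠ 0 := by positivity
    rw [norm_sub_sq_real, real_inner_smul_right, norm_smul, mul_pow, Real.norm_eq_abs, sq_abs]
    field_simp
    ring

section Kaczmarz

variable {n : ℕ} (C : Matrix (Fin n) (Fin n) ℝ)

theorem norm_row_sq_mul_norm_kacz_sq (j : Fin n) (y : EuclideanSpace ℝ (Fin n)) :
    ‖row C j‖ ^ 2 * ‖kacz C j y‖ ^ 2 = ‖row C j‖ ^ 2 * ‖y‖ ^ 2 - ⟪y, row C j⟫ ^ 2 := by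
  unfold kacz
  split_ifs with h
  · simp [h]
  · exact norm_sq_mul_norm_sub_inner_div_smul_sq _ _

theorem mulVecE_apply (y : EuclideanSpace ℝ (Fin n)) (j : Fin n) :
    mulVecE C y j = ⟪y, row C j⟫ := by
  simp [mulVecE, row, Matrix.mulVec, dotProduct, PiLp.inner_apply]

theorem norm_mulVecE_sq (y : EuclideanSpace ℝ (Fin n)) :
    ‖mulVecE C y‖ ^ 2 = ∑ j, ⟪y, row C j⟫ ^ 2 := by
  simp [EuclideanSpace.real_norm_sq_eq, mulVecE_apply]

theorem frobSq_eq_sum_norm_row_sq : frobSq C = ∑ j, ‖row C j‖ ^ 2 := by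
  simp [frobSq, row, EuclideanSpace.real_norm_sq_eq]

variable {C} in
theorem frobSq_pos (hC : C ≠ 0) : 0 < frobSq C := by
  obtain ⟨i, j, hij⟩ : ∃ i j, C i j ≠ 0 := by
    by_contra! h
    exact hC (Matrix.ext h)
  exact Finset.sum_pos' (fun i _ => Finset.sum_nonneg fun j _ => sq_nonneg _)
    ⟨i, Finset.mem_univ _, Finset.sum_pos' (fun j _ => sq_nonneg _)
      ⟨j, Finset.mem_univ _, by positivity⟩⟩

theorem sum_norm_row_sq_mul_norm_kacz_sq (y : EuclideanSpace ℝ (Fin n)) :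
    ∑ j, ‖row C j‖ ^ 2 * ‖kacz C j y‖ ^ 2 = frobSq C * ‖y‖ ^ 2 - ‖mulVecE C y‖ ^ 2 := by
  simp only [norm_row_sq_mul_norm_kacz_sq, Finset.sum_sub_distrib, ← Finset.sum_mul,
    frobSq_eq_sum_norm_row_sq, norm_mulVecE_sq]

end Kaczmarz

theorem kacz_expected_sq_norm_contracts_general {n : ℕ}
    (C : Matrix (Fin n) (Fin n) ℝ) (hC : C ≠ 0)
    (ε : EuclideanSpace ℝ (Fin n))
    (σ : ℝ)
    (hσ : ∀ z : EuclideanSpace ℝ (Fin n), ⟪z, ε⟫ = 0 →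
      ‖mulVecE C z‖ ^ 2 ≥ σ ^ 2 * ‖z‖ ^ 2)
    (r : EuclideanSpace ℝ (Fin n)) (hr : ⟪r, ε⟫ = 0) :
    ∑ j, (‖row C j‖ ^ 2 / frobSq C) * ‖kacz C j r‖ ^ 2
      ≤ (1 - σ ^ 2 / frobSq C) * ‖r‖ ^ 2 := by
  have hF := frobSq_pos hC
  calc ∑ j, (‖row C j‖ ^ 2 / frobSq C) * ‖kacz C j r‖ ^ 2
      = (frobSq C * ‖r‖ ^ 2 - ‖mulVecE C r‖ ^ 2) / frobSq C := by
        simp only [div_mul_eq_mul_div, ← Finset.sum_div, sum_norm_row_sq_mul_norm_kacz_sq]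
    _ ≤ (frobSq C * ‖r‖ ^ 2 - σ ^ 2 * ‖r‖ ^ 2) / frobSq C := by
        gcongr
        exact hσ r hr
    _ = (1 - σ ^ 2 / frobSq C) * ‖r‖ ^ 2 := by
        field_simp

/-- Contraction of the expected squared norm after one random
Kaczmarz step, for vectors orthogonal to the null vector `ε`. -/
theorem kacz_expected_sq_norm_contracts {n : ℕ} (hn : 0 < n)
    (C : Matrix (Fin n) (Fin n) ℝ) (hC : C ≠ 0)
    (ε : EuclideanSpace ℝ (Fin n)) (hε : mulVecE C ε = 0)
    (σ : ℝ) (hσ0 : 0 ≤ σ)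
    (hσ : ∀ z : EuclideanSpace ℝ (Fin n), ⟪z, ε⟫ = 0 →
      ‖mulVecE C z‖ ^ 2 ≥ σ ^ 2 * ‖z‖ ^ 2)
    (r : EuclideanSpace ℝ (Fin n)) (hr : ⟪r, ε⟫ = 0) :
    ∑ j, (‖row C j‖ ^ 2 / frobSq C) * ‖kacz C j r‖ ^ 2
      ≤ (1 - σ ^ 2 / frobSq C) * ‖r‖ ^ 2 :=
  kacz_expected_sq_norm_contracts_general C hC ε σ hσ r hr
end

section
/- (Lemma 1, part 2.) For every k, every starting vector y₀ ∈ EuclideanSpace ℝ (Fin n), writing r(y) = y − (⟪y, ε⟫/‖ε‖²)·ε for the component of y orthogonal to ε, the expectation over all length-k index sequences of the squared orthogonal component decays geometrically: ∑_{j : Fin k → Fin n} (∏_{i<k} ‖c_{j(i)}‖²/‖C‖_F²) · ‖r(y_k(j, y₀))‖² ≤ (1 − σ²/‖C‖_F²)^k · ‖r(y₀)‖². -/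
open scoped RealInnerProductSpace

/-! Every Kaczmarz step `T_j` is the rejection from the row `c_j`, and `Cε = 0` makes every row
orthogonal to `ε`; rejections from orthogonal vectors commute, so `r ∘ T_j = T_j ∘ r`. For `w ⊥ ε`,
averaging `‖c_j‖² ‖T_j w‖² = ‖c_j‖² ‖w‖² - ⟪w, c_j⟫²` over `j` gives
`‖C‖_F² ‖w‖² - ‖Cw‖² ≤ (‖C‖_F² - σ²) ‖w‖²`, a one-step contraction of `‖r y‖²` in expectation;
conditioning on the first `k` indices iterates it. -/

section VecRejection

variable {E : Type*} [NormedAddCommGroup E] [InnerProductSpace ℝ E]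

noncomputable def vecRejection (v y : E) : E := y - (⟪y, v⟫ / ‖v‖ ^ 2) • v

lemma inner_vecRejection_self (v y : E) : ⟪vecRejection v y, v⟫ = 0 := by
  rcases eq_or_ne v 0 with rfl | hv
  · simp
  · rw [vecRejection, inner_sub_left, real_inner_smul_left, real_inner_self_eq_norm_sq,
      div_mul_cancel₀ _ (by positivity), sub_self]

lemma inner_vecRejection_of_inner_eq_zero {u v : E} (h : ⟪v, u⟫ = 0) (y : E) :
    ⟪vecRejection v y, u⟫ = ⟪y, u⟫ := by
  rw [vecRejection, inner_sub_left, real_inner_smul_left, h, mul_zero, sub_zero]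

lemma vecRejection_comm {u v : E} (h : ⟪u, v⟫ = 0) (y : E) :
    vecRejection u (vecRejection v y) = vecRejection v (vecRejection u y) := by
  have h' : ⟪v, u⟫ = 0 := by rwa [real_inner_comm]
  conv_lhs => rw [vecRejection, inner_vecRejection_of_inner_eq_zero h']
  conv_rhs => rw [vecRejection, inner_vecRejection_of_inner_eq_zero h]
  simp only [vecRejection]
  abel

lemma sq_norm_mul_sq_norm_vecRejection (v y : E) :
    ‖v‖ ^ 2 * ‖vecRejection v y‖ ^ 2 = ‖v‖ ^ 2 * ‖y‖ ^ 2 - ⟪y, v⟫ ^ 2 := by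
  rcases eq_or_ne v 0 with rfl | hv
  · simp
  · have : ‖v‖ ^ 2 ≠ 0 := by positivity
    rw [vecRejection, norm_sub_sq_real, real_inner_smul_right, norm_smul, mul_pow,
      Real.norm_eq_abs, sq_abs]
    field_simp
    ring

end VecRejection

lemma Fin.sum_pi_snoc {α M : Type*} [Fintype α] [AddCommMonoid M] {k : ℕ}
    (f : (Fin (k + 1) → α) → M) :
    ∑ j, f j = ∑ q : Fin k → α, ∑ m, f (Fin.snoc q m) := by
  rw [← (Fin.snocEquiv fun _ => α).sum_comp, Fintype.sum_prod_type, Finset.sum_comm]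
  rfl

section Kaczmarz

variable {n : ℕ} (C : Matrix (Fin n) (Fin n) ℝ)

lemma kacz_eq_vecRejection (j : Fin n) : kacz C j = vecRejection (row C j) := by
  -- for a zero row the rejection formula divides by `0` and so also returns `y`
  funext y
  by_cases h : row C j = 0 <;> simp [kacz, vecRejection, h]

lemma inner_row_eq_mulVecE (z : EuclideanSpace ℝ (Fin n)) (j : Fin n) :
    ⟪z, row C j⟫ = mulVecE C z j := by
  simp [row, mulVecE, Matrix.mulVec, dotProduct, PiLp.inner_apply]

lemma sq_norm_mulVecE (z : EuclideanSpace ℝ (Fin n)) :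
    ‖mulVecE C z‖ ^ 2 = ∑ j, ⟪z, row C j⟫ ^ 2 := by
  simp [EuclideanSpace.norm_sq_eq, inner_row_eq_mulVecE]

lemma sum_sq_norm_row : ∑ j, ‖row C j‖ ^ 2 = frobSq C := by
  simp [EuclideanSpace.norm_sq_eq, row, frobSq]

lemma frobSq_nonneg : 0 ≤ frobSq C := sum_sq_norm_row C ▸ by positivity

lemma inner_row_of_mulVecE_eq_zero {ε : EuclideanSpace ℝ (Fin n)} (hε : mulVecE C ε = 0)
    (j : Fin n) : ⟪row C j, ε⟫ = 0 := by
  rw [real_inner_comm, inner_row_eq_mulVecE, hε, PiLp.zero_apply]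

lemma vecRejection_kacz {ε : EuclideanSpace ℝ (Fin n)} (hε : mulVecE C ε = 0) (j : Fin n)
    (y : EuclideanSpace ℝ (Fin n)) :
    vecRejection ε (kacz C j y) = kacz C j (vecRejection ε y) := by
  rw [kacz_eq_vecRejection, vecRejection_comm (inner_row_of_mulVecE_eq_zero C hε j)]

lemma sum_sq_norm_row_mul_sq_norm_kacz (w : EuclideanSpace ℝ (Fin n)) :
    ∑ j, ‖row C j‖ ^ 2 * ‖kacz C j w‖ ^ 2 = frobSq C * ‖w‖ ^ 2 - ‖mulVecE C w‖ ^ 2 := by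
  simp only [kacz_eq_vecRejection, sq_norm_mul_sq_norm_vecRejection, Finset.sum_sub_distrib,
    ← Finset.sum_mul, sum_sq_norm_row, sq_norm_mulVecE]

variable {C}

lemma sum_mul_sq_norm_kacz_le {ε : EuclideanSpace ℝ (Fin n)} {σ : ℝ}
    (hσ : ∀ z : EuclideanSpace ℝ (Fin n), ⟪z, ε⟫ = 0 → ‖mulVecE C z‖ ^ 2 ≥ σ ^ 2 * ‖z‖ ^ 2)
    {w : EuclideanSpace ℝ (Fin n)} (hw : ⟪w, ε⟫ = 0) :
    ∑ j, ‖row C j‖ ^ 2 / frobSq C * ‖kacz C j w‖ ^ 2 ≤ (1 - σ ^ 2 / frobSq C) * ‖w‖ ^ 2 := by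
  rcases (frobSq_nonneg C).eq_or_lt with hF | hF
  · simp [← hF]
  calc ∑ j, ‖row C j‖ ^ 2 / frobSq C * ‖kacz C j w‖ ^ 2
      = (frobSq C * ‖w‖ ^ 2 - ‖mulVecE C w‖ ^ 2) / frobSq C := by
        simp only [div_mul_eq_mul_div, ← Finset.sum_div, sum_sq_norm_row_mul_sq_norm_kacz]
    _ ≤ (frobSq C * ‖w‖ ^ 2 - σ ^ 2 * ‖w‖ ^ 2) / frobSq C := by
        gcongr; exact hσ w hw
    _ = (1 - σ ^ 2 / frobSq C) * ‖w‖ ^ 2 := by field_simp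

lemma one_sub_sq_div_frobSq_nonneg {ε : EuclideanSpace ℝ (Fin n)} (hε : mulVecE C ε = 0)
    {σ : ℝ}
    (hσ : ∀ z : EuclideanSpace ℝ (Fin n), ⟪z, ε⟫ = 0 → ‖mulVecE C z‖ ^ 2 ≥ σ ^ 2 * ‖z‖ ^ 2) :
    0 ≤ 1 - σ ^ 2 / frobSq C := by
  by_cases hrows : ∀ j, row C j = 0
  · simp [← sum_sq_norm_row, hrows]
  -- a nonzero row lies in `ε^⊥`, where the one-step bound forces the factor to be nonnegative
  obtain ⟨j, hj⟩ := not_forall.mp hrows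
  have hle := sum_mul_sq_norm_kacz_le hσ (inner_row_of_mulVecE_eq_zero C hε j)
  have hsum : 0 ≤ ∑ m, ‖row C m‖ ^ 2 / frobSq C * ‖kacz C m (row C j)‖ ^ 2 :=
    Finset.sum_nonneg fun m _ => by have := frobSq_nonneg C; positivity
  exact nonneg_of_mul_nonneg_left (hsum.trans hle) (by positivity)

end Kaczmarz

lemma sum_prod_mul_kaczIter_le {n : ℕ} (C : Matrix (Fin n) (Fin n) ℝ)
    (V : EuclideanSpace ℝ (Fin n) → ℝ) {p : Fin n → ℝ} (hp : ∀ j, 0 ≤ p j) {q : ℝ} (hq : 0 ≤ q)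
    (hstep : ∀ y, ∑ j, p j * V (kacz C j y) ≤ q * V y) (k : ℕ) (y₀ : EuclideanSpace ℝ (Fin n)) :
    ∑ j : Fin k → Fin n, (∏ i, p (j i)) * V (kaczIter C k j y₀) ≤ q ^ k * V y₀ := by
  induction k with
  | zero => simp [kaczIter]
  | succ k ih =>
    have hiter (j : Fin k → Fin n) (m : Fin n) :
        kaczIter C (k + 1) (Fin.snoc j m) y₀ = kacz C m (kaczIter C k j y₀) := by
      simp [kaczIter]
    calc ∑ j : Fin (k + 1) → Fin n, (∏ i, p (j i)) * V (kaczIter C (k + 1) j y₀)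
        = ∑ j : Fin k → Fin n, (∏ i, p (j i)) * ∑ m, p m * V (kacz C m (kaczIter C k j y₀)) := by
          simp only [Fin.sum_pi_snoc, Fin.prod_univ_castSucc, Fin.snoc_castSucc, Fin.snoc_last,
            hiter, Finset.mul_sum, mul_assoc]
      _ ≤ ∑ j : Fin k → Fin n, (∏ i, p (j i)) * (q * V (kaczIter C k j y₀)) := by
          gcongr with j
          · exact Finset.prod_nonneg fun i _ => hp (j i)
          · exact hstep _
      _ = q * ∑ j : Fin k → Fin n, (∏ i, p (j i)) * V (kaczIter C k j y₀) := by
          simp only [Finset.mul_sum, mul_left_comm]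
      _ ≤ q ^ (k + 1) * V y₀ := by
          rw [pow_succ', mul_assoc]
          gcongr

theorem kacz_orthogonal_component_decay_general {n : ℕ}
    (C : Matrix (Fin n) (Fin n) ℝ)
    (ε : EuclideanSpace ℝ (Fin n)) (hε : mulVecE C ε = 0)
    (σ : ℝ)
    (hσ : ∀ z : EuclideanSpace ℝ (Fin n), ⟪z, ε⟫ = 0 →
      ‖mulVecE C z‖ ^ 2 ≥ σ ^ 2 * ‖z‖ ^ 2)
    (r : EuclideanSpace ℝ (Fin n) → EuclideanSpace ℝ (Fin n))
    (hr : ∀ y, r y = y - ((⟪y, ε⟫ / ‖ε‖ ^ 2) • ε))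
    (k : ℕ) (y₀ : EuclideanSpace ℝ (Fin n)) :
    ∑ j : Fin k → Fin n,
        (∏ i : Fin k, ‖row C (j i)‖ ^ 2 / frobSq C) * ‖r (kaczIter C k j y₀)‖ ^ 2
      ≤ (1 - σ ^ 2 / frobSq C) ^ k * ‖r y₀‖ ^ 2 := by
  obtain rfl : r = vecRejection ε := funext hr
  have hstep (y : EuclideanSpace ℝ (Fin n)) :
      ∑ j, ‖row C j‖ ^ 2 / frobSq C * ‖vecRejection ε (kacz C j y)‖ ^ 2
        ≤ (1 - σ ^ 2 / frobSq C) * ‖vecRejection ε y‖ ^ 2 := by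
    simpa only [vecRejection_kacz C hε] using
      sum_mul_sq_norm_kacz_le hσ (inner_vecRejection_self ε y)
  exact sum_prod_mul_kaczIter_le C (fun y => ‖vecRejection ε y‖ ^ 2)
    (fun j => div_nonneg (sq_nonneg _) (frobSq_nonneg C))
    (one_sub_sq_div_frobSq_nonneg hε hσ) hstep k y₀

/-- **Lemma 1, part 2.** The expected squared component orthogonal
to `ε` decays geometrically along the random Kaczmarz iteration. -/
theorem kacz_orthogonal_component_decay {n : ℕ} (hn : 0 < n)
    (C : Matrix (Fin n) (Fin n) ℝ) (hC : C ≠ 0)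
    (ε : EuclideanSpace ℝ (Fin n)) (hε0 : ε ≠ 0) (hε : mulVecE C ε = 0)
    (σ : ℝ) (hσ0 : 0 ≤ σ)
    (hσ : ∀ z : EuclideanSpace ℝ (Fin n), ⟪z, ε⟫ = 0 →
      ‖mulVecE C z‖ ^ 2 ≥ σ ^ 2 * ‖z‖ ^ 2)
    (r : EuclideanSpace ℝ (Fin n) → EuclideanSpace ℝ (Fin n))
    (hr : ∀ y, r y = y - ((⟪y, ε⟫ / ‖ε‖ ^ 2) • ε))
    (k : ℕ) (y₀ : EuclideanSpace ℝ (Fin n)) :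
    ∑ j : Fin k → Fin n,
        (∏ i : Fin k, ‖row C (j i)‖ ^ 2 / frobSq C) * ‖r (kaczIter C k j y₀)‖ ^ 2
      ≤ (1 - σ ^ 2 / frobSq C) ^ k * ‖r y₀‖ ^ 2 :=
  kacz_orthogonal_component_decay_general C ε hε σ hσ r hr k y₀
end
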